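/- Let G be a looped simple graph containing unlooped vertices u, v, w, x forming a matched 4-path: N(v)={u,w}, N(w)={v,x}, and N(u)∖{v} = N(x)∖{w}. Then the permutation α of W(G) given by the product of transpositions ((u,φ)(x,φ)) ((u,χ)(v,φ)) ((u,ψ)(w,χ)) ((v,χ)(x,ψ)) ((v,ψ)(w,ψ)) ((w,φ)(x,χ)) is an automorphism of the matroid M(IAS(G)). -/

import Mathlib

/-- The three column types of the matrix `IAS(G) = (I | A | I+A)`. -/
inductive GType : Type
  | phi | chi | psi
  deriving DecidableEq

instance instFintypeGType : Fintype GType where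
  elems := {GType.phi, GType.chi, GType.psi}
  complete := fun t => by cases t <;> simp

/-- The column of `IAS(G) = (I | A(G) | I+A(G))` indexed by a ground set element of
`W(G) = V × {φ, χ, ψ}`. -/
def iasCol {V : Type} [DecidableEq V] (A : Matrix V V (ZMod 2)) : V × GType → V → ZMod 2
  | (v, GType.phi) => fun w => if w = v then 1 else 0
  | (v, GType.chi) => fun w => A w v
  | (v, GType.psi) => fun w => (if w = v then 1 else 0) + A w v

/-- Independence in the binary matroid `M(IAS(G))`: a set of ground elements is independent
iff the corresponding columns of `IAS(G)` are linearly independent over `GF(2)`. -/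
def IasIndep {V : Type} [DecidableEq V] (A : Matrix V V (ZMod 2))
    (S : Set (V × GType)) : Prop :=
  LinearIndependent (ZMod 2) (fun p : S => iasCol A p.1)

/-- A circuit of `M(IAS(G))`: a minimal dependent set. -/
def IasCircuit {V : Type} [DecidableEq V] (A : Matrix V V (ZMod 2))
    (C : Set (V × GType)) : Prop :=
  ¬ IasIndep A C ∧ ∀ D : Set (V × GType), D ⊂ C → IasIndep A D

/-- The rank of a subset of the ground set of `M(IAS(G))`: the `GF(2)`-rank of the
corresponding set of columns of `IAS(G)`. -/
noncomputable def iasRk {V : Type} [Fintype V] [DecidableEq V] (A : Matrix V V (ZMod 2))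
    (S : Set (V × GType)) : ℕ :=
  Module.finrank (ZMod 2) (Submodule.span (ZMod 2) (iasCol A '' S))

/-!
Write `e t` for the unit vectors of `GF(2)^V` and `A t` for the columns of `A`, so that the
columns of `IAS(G)` at `t` are `e t`, `A t` and `e t + A t`. The hypotheses give
`A v = e u + e w`, `A w = e v + e x` and `A x = A u + e v + e w`. The linear map
`T f = f + (f u + f x) (e u + e x) + (f v + f w) (e v + A u)` is then an involution of `GF(2)^V`
exchanging `e u ↔ e x`, `e v ↔ A u`, `e w ↔ A x` and fixing `e t` and `A t` for every other `t`;
so `T` maps the column at `p` to the column at `α p`, and a linear bijection that permutes the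
columns in this way preserves their linear independence.
-/

open Function
open scoped Matrix

theorem linearIndepOn_image_iff_of_comp_eq {R M M' ι ι' : Type*} [Semiring R]
    [AddCommMonoid M] [AddCommMonoid M'] [Module R M] [Module R M'] {c : ι → M} {c' : ι' → M'} (e : ι ≃ ι')
    (f : M →ₗ[R] M') (hf : Injective f) (h : c' ∘ e = f ∘ c) (s : Set ι) :
    LinearIndepOn R c' (e '' s) ↔ LinearIndepOn R c s := by
  rw [← linearIndepOn_equiv, h, f.linearIndepOn_iff_of_injOn hf.injOn]

section BendMap

variable {V K : Type*} [DecidableEq V] [CommRing K] {u v w x : V} {a : V → K}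

def bendMap (u v w x : V) (a : V → K) : (V → K) →ₗ[K] V → K :=
  LinearMap.id
    + LinearMap.smulRight (LinearMap.proj (R := K) (φ := fun _ : V => K) u + LinearMap.proj x)
      (Pi.single u 1 + Pi.single x 1)
    + LinearMap.smulRight (LinearMap.proj (R := K) (φ := fun _ : V => K) v + LinearMap.proj w)
      (Pi.single v 1 + a)

theorem bendMap_apply (f : V → K) : bendMap u v w x a f
    = f + (f u + f x) • (Pi.single u 1 + Pi.single x 1) + (f v + f w) • (Pi.single v 1 + a) :=
  rfl

variable [CharP K 2]

theorem bendMap_eq_self {f : V → K} (hfux : f u = f x) (hfvw : f v = f w) :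
    bendMap u v w x a f = f := by
  simp [bendMap_apply, hfux, hfvw, CharTwo.add_self_eq_zero]

theorem bendMap_involutive (huv : u ≠ v) (huw : u ≠ w) (hux : u ≠ x) (hvw : v ≠ w)
    (hvx : v ≠ x) (hwx : w ≠ x) (hau : a u = a x) (hav : a v + a w = 1) :
    Involutive (bendMap u v w x a) := by
  intro f
  have hTux : bendMap u v w x a f u + bendMap u v w x a f x = f u + f x := by
    simp [bendMap_apply, huv, hux, hvx.symm, hau]
    grind
  have hTvw : bendMap u v w x a f v + bendMap u v w x a f w = f v + f w := by
    simp [bendMap_apply, huv.symm, huw.symm, hvx, hwx, hvw.symm]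
    grind
  rw [bendMap_apply (bendMap u v w x a f), hTux, hTvw, bendMap_apply f]
  ext s
  simp only [Pi.add_apply, Pi.smul_apply, smul_eq_mul]
  grind

theorem bendMap_single_u (huv : u ≠ v) (huw : u ≠ w) (hux : u ≠ x) :
    bendMap u v w x a (Pi.single u 1) = Pi.single x 1 := by
  ext s
  simp [bendMap_apply, huv, huw, hux]
  grind

theorem bendMap_single_v (huv : u ≠ v) (hvw : v ≠ w) (hvx : v ≠ x) :
    bendMap u v w x a (Pi.single v 1) = a := by
  ext s
  simp [bendMap_apply, huv.symm, hvw, hvx]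
  grind

theorem bendMap_single_w (huw : u ≠ w) (hvw : v ≠ w) (hwx : w ≠ x) :
    bendMap u v w x a (Pi.single w 1) = Pi.single v 1 + Pi.single w 1 + a := by
  ext s
  simp [bendMap_apply, huw, hvw, hwx.symm]
  grind

end BendMap

section IAS

variable {V : Type} [DecidableEq V] {A : Matrix V V (ZMod 2)}

theorem iasCol_phi (t : V) : iasCol A (t, .phi) = Pi.single t 1 := by
  ext s; simp [iasCol, Pi.single_apply]

theorem iasCol_chi (t : V) : iasCol A (t, .chi) = Aᵀ t := rfl

theorem iasCol_psi (t : V) : iasCol A (t, .psi) = Pi.single t 1 + Aᵀ t := by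
  ext s; simp [iasCol, Pi.single_apply]

def bendPerm (u v w x : V) : Equiv.Perm (V × GType) :=
  ((((Equiv.swap (u, .phi) (x, .phi)).trans (Equiv.swap (u, .chi) (v, .phi))).trans
      (Equiv.swap (u, .psi) (w, .chi))).trans (Equiv.swap (v, .chi) (x, .psi))).trans
    ((Equiv.swap (v, .psi) (w, .psi)).trans (Equiv.swap (w, .phi) (x, .chi)))

theorem transpose_eq_single_add_single {u v w : V} (huw : u ≠ w) (hv : A v v = 0)
    (hN : ∀ t, (t ≠ v ∧ A t v = 1) ↔ (t = u ∨ t = w)) :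
    Aᵀ v = Pi.single u 1 + Pi.single w 1 := by
  have huv := ((hN u).2 (.inl rfl)).1
  have hwv := ((hN w).2 (.inr rfl)).1
  have eq_of_eq_one_iff : ∀ a b : ZMod 2, (a = 1 ↔ b = 1) → a = b := by decide
  ext t
  by_cases htv : t = v
  · subst htv
    simp [hv, huv.symm, hwv.symm]
  have hNt : A t v = 1 ↔ t = u ∨ t = w := by simpa [htv] using hN t
  have hsum : (Pi.single u 1 + Pi.single w 1 : V → ZMod 2) t = 1 ↔ t = u ∨ t = w := by
    by_cases htu : t = u <;> by_cases htw : t = w <;> simp_all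
  exact eq_of_eq_one_iff _ _ (hNt.trans hsum.symm)

theorem transpose_eq_add_transpose (hA : A.IsSymm) {u v w x : V} (huv : u ≠ v) (huw : u ≠ w)
    (hux : u ≠ x) (hvw : v ≠ w) (hvx : v ≠ x) (hwx : w ≠ x)
    (hcv : Aᵀ v = Pi.single u 1 + Pi.single w 1) (hcw : Aᵀ w = Pi.single v 1 + Pi.single x 1)
    (hmatch : ∀ t, t ≠ v → t ≠ w → A t u = A t x) :
    Aᵀ x = Pi.single v 1 + Pi.single w 1 + Aᵀ u := by
  have hAvu : A v u = 1 := by simpa [hA.apply u v, huw] using congrFun hcv u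
  have hAvx : A v x = 0 := by simpa [hA.apply x v, hux.symm, hwx] using congrFun hcv x
  have hAwu : A w u = 0 := by simpa [hA.apply u w, huv, hux] using congrFun hcw u
  have hAwx : A w x = 1 := by simpa [hA.apply x w, hvx.symm] using congrFun hcw x
  ext t
  by_cases htv : t = v
  · subst htv
    simp [hAvu, hAvx, hvw]
    decide
  by_cases htw : t = w
  · subst htw
    simp [hAwu, hAwx, hvw.symm]
  simp [htv, htw, hmatch t htv htw]

theorem bendMap_transpose_involutive (hA : A.IsSymm) {u v w x : V}
    (huv : u ≠ v) (huw : u ≠ w) (hux : u ≠ x) (hvw : v ≠ w) (hvx : v ≠ x) (hwx : w ≠ x)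
    (hcv : Aᵀ v = Pi.single u 1 + Pi.single w 1) (hcw : Aᵀ w = Pi.single v 1 + Pi.single x 1)
    (hcx : Aᵀ x = Pi.single v 1 + Pi.single w 1 + Aᵀ u) :
    Involutive (bendMap u v w x (Aᵀ u)) := by
  have hsymm (s t : V) : Aᵀ t s = Aᵀ s t := hA.apply t s
  have hau : Aᵀ u u = Aᵀ u x := by
    rw [hsymm x u, hcx]; simp [huv.symm, huw.symm]
  have hav : Aᵀ u v + Aᵀ u w = 1 := by
    rw [hsymm v u, hsymm w u, hcv, hcw]; simp [huv, huw, hux]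
  exact bendMap_involutive huv huw hux hvw hvx hwx hau hav

theorem iasCol_bendPerm (hA : A.IsSymm) {u v w x : V}
    (huv : u ≠ v) (huw : u ≠ w) (hux : u ≠ x) (hvw : v ≠ w) (hvx : v ≠ x) (hwx : w ≠ x)
    (hcv : Aᵀ v = Pi.single u 1 + Pi.single w 1) (hcw : Aᵀ w = Pi.single v 1 + Pi.single x 1)
    (hcx : Aᵀ x = Pi.single v 1 + Pi.single w 1 + Aᵀ u) (r : V × GType) :
    iasCol A (bendPerm u v w x r) = bendMap u v w x (Aᵀ u) (iasCol A r) := by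
  have hT := bendMap_transpose_involutive hA huv huw hux hvw hvx hwx hcv hcw hcx
  have hTu := bendMap_single_u (a := Aᵀ u) (x := x) huv huw hux
  have hTv := bendMap_single_v (a := Aᵀ u) (x := x) huv hvw hvx
  have hTw := bendMap_single_w (a := Aᵀ u) (x := x) huw hvw hwx
  have hTx : bendMap u v w x (Aᵀ u) (Pi.single x 1) = Pi.single u 1 := hT.eq_iff.mpr hTu.symm
  have hTa : bendMap u v w x (Aᵀ u) (Aᵀ u) = Pi.single v 1 := hT.eq_iff.mpr hTv.symm
  obtain ⟨t, g⟩ := r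
  by_cases ht : t = u ∨ t = v ∨ t = w ∨ t = x
  · rcases ht with rfl | rfl | rfl | rfl <;> cases g <;>
      simp [bendPerm, Equiv.swap_apply_def, huv, huw, hux, hvw, hvx, hwx, huv.symm, huw.symm,
        hux.symm, hvw.symm, hvx.symm, hwx.symm, iasCol_phi, iasCol_psi, iasCol_chi, hTu, hTa, hTx,
        hTv, hTw, hcw, hcv, hcx] <;>
      (ext s; simp only [Pi.add_apply]; grind)
  · obtain ⟨htu, htv, htw, htx⟩ : t ≠ u ∧ t ≠ v ∧ t ≠ w ∧ t ≠ x := by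
      simpa only [not_or] using ht
    have hAut : A u t = A x t := by
      rw [hA.apply t u, hA.apply t x]; simpa [htv, htw] using (congrFun hcx t).symm
    have hAvt : A v t = 0 := by rw [hA.apply t v]; simpa [htu, htw] using congrFun hcv t
    have hAwt : A w t = 0 := by rw [hA.apply t w]; simpa [htv, htx] using congrFun hcw t
    have hfix : bendPerm u v w x (t, g) = (t, g) := by
      cases g <;> simp [bendPerm, Equiv.swap_apply_def, htu, htv, htw, htx]
    rw [hfix, eq_comm]
    cases g <;> simp only [iasCol_phi, iasCol_chi, iasCol_psi] <;> apply bendMap_eq_self <;>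
      simp [htu.symm, htv.symm, htw.symm, htx.symm, hAut, hAvt, hAwt]

end IAS

theorem matched_four_path_automorphism_general {V : Type} [DecidableEq V]
    (A : Matrix V V (ZMod 2)) (hA : A.IsSymm) (u v w x : V)
    (huv : u ≠ v) (huw : u ≠ w) (hux : u ≠ x) (hvw : v ≠ w) (hvx : v ≠ x)
    (hwx : w ≠ x)
    (hv : A v v = 0) (hw : A w w = 0)
    (hNv : ∀ t, (t ≠ v ∧ A t v = 1) ↔ (t = u ∨ t = w))
    (hNw : ∀ t, (t ≠ w ∧ A t w = 1) ↔ (t = v ∨ t = x))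
    (hmatch : ∀ t, t ≠ v → t ≠ w → A t u = A t x) :
    ∀ S : Set (V × GType),
      IasIndep A
        ((((((Equiv.swap ((u, GType.phi)) ((x, GType.phi))).trans
          (Equiv.swap ((u, GType.chi)) ((v, GType.phi)))).trans
          (Equiv.swap ((u, GType.psi)) ((w, GType.chi)))).trans
          (Equiv.swap ((v, GType.chi)) ((x, GType.psi)))).trans
          ((Equiv.swap ((v, GType.psi)) ((w, GType.psi))).trans
          (Equiv.swap ((w, GType.phi)) ((x, GType.chi))))) '' S) ↔
        IasIndep A S := by
  have hcv := transpose_eq_single_add_single huw hv hNv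
  have hcw := transpose_eq_single_add_single hvx hw hNw
  have hcx := transpose_eq_add_transpose hA huv huw hux hvw hvx hwx hcv hcw hmatch
  exact linearIndepOn_image_iff_of_comp_eq (bendPerm u v w x) _
    (bendMap_transpose_involutive hA huv huw hux hvw hvx hwx hcv hcw hcx).injective
    (funext (iasCol_bendPerm hA huv huw hux hvw hvx hwx hcv hcw hcx))

/-- bending a matched 4-path `u,v,w,x` (all unlooped, `N(v)={u,w}`,
`N(w)={v,x}`, `N(u)∖{v} = N(x)∖{w}`) gives a matroid automorphism of `M(IAS(G))`: the
permutation `α = ((u,φ)(x,φ)) ((u,χ)(v,φ)) ((u,ψ)(w,χ)) ((v,χ)(x,ψ)) ((v,ψ)(w,ψ))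
((w,φ)(x,χ))` preserves independence. -/
theorem matched_four_path_automorphism {V : Type} [Fintype V] [DecidableEq V]
    (A : Matrix V V (ZMod 2)) (hA : A.IsSymm) (u v w x : V)
    (huv : u ≠ v) (huw : u ≠ w) (hux : u ≠ x) (hvw : v ≠ w) (hvx : v ≠ x)
    (hwx : w ≠ x)
    (hu : A u u = 0) (hv : A v v = 0) (hw : A w w = 0) (hx : A x x = 0)
    (hNv : ∀ t, (t ≠ v ∧ A t v = 1) ↔ (t = u ∨ t = w))
    (hNw : ∀ t, (t ≠ w ∧ A t w = 1) ↔ (t = v ∨ t = x))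
    (hmatch : ∀ t, t ≠ v → t ≠ w → A t u = A t x) :
    ∀ S : Set (V × GType),
      IasIndep A
        ((((((Equiv.swap ((u, GType.phi)) ((x, GType.phi))).trans
          (Equiv.swap ((u, GType.chi)) ((v, GType.phi)))).trans
          (Equiv.swap ((u, GType.psi)) ((w, GType.chi)))).trans
          (Equiv.swap ((v, GType.chi)) ((x, GType.psi)))).trans
          ((Equiv.swap ((v, GType.psi)) ((w, GType.psi))).trans
          (Equiv.swap ((w, GType.phi)) ((x, GType.chi))))) '' S) ↔
        IasIndep A S :=
  matched_four_path_automorphism_general A hA u v w x huv huw hux hvw hvx hwx hv hw hNv hNw hmatch
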